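/- arXiv:1709.09980 — 6 statements merged into one kernel-verified Lean document; each statement's English description precedes it below -/
import Mathlib

section
/- For the unconstrained binary interaction rule v' = v + Δt·I(v,w;ρ), where I(v,w;ρ) = P(ρ)(min{v+Δv,1} − v) if v < w, I(v,w;ρ) = (1−P(ρ))(P(ρ)w − v) if v > w, and I(v,v;ρ)=0, with P(ρ) = 1−ρ^γ, if 0 < Δt ≤ 1, v, w ∈ [0,1], ρ ∈ [0,1], Δv > 0, γ > 0, then v' ∈ [0,1]. -/
noncomputable def P (γ ρ : ℝ) : ℝ := 1 - ρ ^ γ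

noncomputable def I (γ Δv ρ v w : ℝ) : ℝ :=
  if v < w then P γ ρ * (min (v + Δv) 1 - v)
  else if w < v then (1 - P γ ρ) * (P γ ρ * w - v)
  else 0

theorem stmt0 (γ Δv ρ v w Δt : ℝ) (hγ : 0 < γ) (hΔv : 0 < Δv)
    (hρ : ρ ∈ Set.Icc (0:ℝ) 1) (hv : v ∈ Set.Icc (0:ℝ) 1)
    (hw : w ∈ Set.Icc (0:ℝ) 1) (hΔt : 0 < Δt) (hΔt1 : Δt ≤ 1) :
    v + Δt * I γ Δv ρ v w ∈ Set.Icc (0:ℝ) 1 := by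
  obtain ⟨hρ0, hρ1⟩ := hρ
  obtain ⟨hv0, hv1⟩ := hv
  obtain ⟨hw0, hw1⟩ := hw
  have hrγ0 : 0 ≤ ρ ^ γ := Real.rpow_nonneg hρ0 γ
  have hrγ1 : ρ ^ γ ≤ 1 := Real.rpow_le_one hρ0 hρ1 hγ.le
  have hP0 : 0 ≤ P γ ρ := by simp [P]; linarith
  have hP1 : P γ ρ ≤ 1 := by simp [P]; linarith
  unfold I
  rcases lt_trichotomy v w with h | h | h
  · rw [if_pos h]
    have hm1 : min (v + Δv) 1 ≤ 1 := min_le_right _ _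
    have hm0 : v ≤ min (v + Δv) 1 := le_min (by linarith) (by linarith)
    have hI0 : 0 ≤ P γ ρ * (min (v + Δv) 1 - v) := mul_nonneg hP0 (by linarith)
    constructor
    · nlinarith
    · nlinarith [mul_le_one₀ hP1 (by linarith : (0:ℝ) ≤ min (v + Δv) 1 - v) (by linarith : min (v + Δv) 1 - v ≤ 1)]
  · simp [h]; constructor <;> linarith
  · rw [if_neg (by linarith), if_pos h]
    have hPw0 : 0 ≤ P γ ρ * w := mul_nonneg hP0 hw0
    have hPw : P γ ρ * w ≤ w := by nlinarith
    have hI1 : (1 - P γ ρ) * (P γ ρ * w - v) ≤ 0 :=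
      mul_nonpos_of_nonneg_of_nonpos (by linarith) (by linarith)
    constructor
    · nlinarith [mul_le_one₀ (by linarith : 1 - P γ ρ ≤ 1) (by linarith : (0:ℝ) ≤ v - P γ ρ * w) (by linarith : v - P γ ρ * w ≤ 1)]
    · nlinarith
end

section
/- For the constrained binary interaction rule v' = v + (νΔt/(ν+Δt²))·I(v,w;ρ) + (Δt²/(ν+Δt²))·(w−v), with I as in the kinetic traffic model, if 0 < Δt ≤ 1, ν > 0, v, w ∈ [0,1], then v' ∈ [0,1]. -/
theorem P_mem_Icc {γ ρ : ℝ} (hγ : 0 ≤ γ) (hρ : ρ ∈ Set.Icc (0:ℝ) 1) :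
    P γ ρ ∈ Set.Icc (0:ℝ) 1 := by
  obtain ⟨hρ0, hρ1⟩ := hρ
  have hpow_nonneg := Real.rpow_nonneg hρ0 γ
  have hpow_le_one := Real.rpow_le_one hρ0 hρ1 hγ
  constructor <;> simp only [P] <;> linarith

theorem add_I_mem_Icc {γ Δv ρ v w : ℝ} (hΔv : 0 ≤ Δv) (hP : P γ ρ ∈ Set.Icc (0:ℝ) 1)
    (hv : v ∈ Set.Icc (0:ℝ) 1) (hw : w ∈ Set.Icc (0:ℝ) 1) :
    v + I γ Δv ρ v w ∈ Set.Icc (0:ℝ) 1 := by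
  obtain ⟨hP0, hP1⟩ := hP
  obtain ⟨hv0, hv1⟩ := hv
  obtain ⟨hw0, hw1⟩ := hw
  unfold I
  split_ifs with hlt hgt
  · have hm0 : v ≤ min (v + Δv) 1 := le_min (by linarith) hv1
    have hm1 : min (v + Δv) 1 ≤ 1 := min_le_right _ _
    constructor <;> nlinarith [mul_nonneg hP0 (sub_nonneg.2 hm0)]
  · -- `v + (1 - P)(P w - v) = P v + (1 - P) P w`
    constructor <;> nlinarith [mul_nonneg hP0 hv0, mul_nonneg (mul_nonneg (sub_nonneg.2 hP1) hP0) hw0,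
      mul_le_mul_of_nonneg_left hv1 hP0, mul_le_mul_of_nonneg_left hw1 hP0]
  · simpa using ⟨hv0, hv1⟩

theorem add_mul_sub_add_mul_sub_mem_Icc {a b v x y : ℝ} (ha : 0 ≤ a) (hb : 0 ≤ b)
    (hab : a + b ≤ 1) (hv : v ∈ Set.Icc (0:ℝ) 1) (hx : x ∈ Set.Icc (0:ℝ) 1)
    (hy : y ∈ Set.Icc (0:ℝ) 1) :
    v + a * (x - v) + b * (y - v) ∈ Set.Icc (0:ℝ) 1 := by
  obtain ⟨hv0, hv1⟩ := hv
  obtain ⟨hx0, hx1⟩ := hx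
  obtain ⟨hy0, hy1⟩ := hy
  constructor <;> nlinarith [mul_nonneg ha hx0, mul_nonneg hb hy0, mul_le_mul_of_nonneg_left hx1 ha,
    mul_le_mul_of_nonneg_left hy1 hb, mul_nonneg (sub_nonneg.2 hab) hv0,
    mul_le_mul_of_nonneg_left hv1 (sub_nonneg.2 hab)]

theorem mul_div_add_sq_div_le_one {ν Δt : ℝ} (hν : 0 ≤ ν) (hS : 0 < ν + Δt ^ 2) (hΔt1 : Δt ≤ 1) :
    ν * Δt / (ν + Δt ^ 2) + Δt ^ 2 / (ν + Δt ^ 2) ≤ 1 := by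
  rw [← add_div, div_le_one hS]
  nlinarith

theorem stmt2 (γ Δv ρ v w Δt ν : ℝ) (hγ : 0 < γ) (hΔv : 0 < Δv)
    (hρ : ρ ∈ Set.Icc (0:ℝ) 1) (hv : v ∈ Set.Icc (0:ℝ) 1)
    (hw : w ∈ Set.Icc (0:ℝ) 1) (hΔt : 0 < Δt) (hΔt1 : Δt ≤ 1) (hν : 0 < ν) :
    v + (ν * Δt / (ν + Δt ^ 2)) * I γ Δv ρ v w + (Δt ^ 2 / (ν + Δt ^ 2)) * (w - v)
      ∈ Set.Icc (0:ℝ) 1 := by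
  have hS : 0 < ν + Δt ^ 2 := by positivity
  have hunconstrained := add_I_mem_Icc hΔv.le (P_mem_Icc hγ.le hρ) hv hw
  have h := add_mul_sub_add_mul_sub_mem_Icc (by positivity) (by positivity)
    (mul_div_add_sq_div_le_one hν.le hS hΔt1) hv hunconstrained hw
  rwa [add_sub_cancel_left] at h
end

section
/- Assume V, E, 𝒱, ℰ are differentiable on [0,∞) with dV/dτ = d𝒱/dτ, dE/dτ = d ℰ/dτ − (ρ/ν₀)(E−V²), E(τ) − V(τ)² ≥ 0 for all τ, V(0)=𝒱(0), E(0)=ℰ(0), ρ ≥ 0, ν₀ > 0. Then for all τ ≥ 0: V(τ) = 𝒱(τ) and E(τ) − V(τ)² ≤ ℰ(τ) − 𝒱(τ)². -/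
/-! The control does not act on the momentum equation, so `V - 𝒱` has zero derivative and vanishes.
It only damps the energy, at the nonnegative rate `(ρ / ν₀) (E - V²)`, so `E - ℰ` is
nonincreasing from `0`; with `V = 𝒱` this is the comparison of the two variances. -/

theorem le_of_deriv_le_of_le {f g : ℝ → ℝ} (hf : Differentiable ℝ f) (hg : Differentiable ℝ g)
    (hfg : ∀ x, deriv f x ≤ deriv g x) {a b : ℝ} (hab : a ≤ b) (ha : f a ≤ g a) : f b ≤ g b := by
  have hmono : Monotone (g - f) := monotone_of_deriv_nonneg (hg.sub hf) fun x => by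
    rw [deriv_sub (hg x) (hf x), sub_nonneg]
    exact hfg x
  have := hmono hab
  simp only [Pi.sub_apply] at this
  linarith

theorem stmt10 (V E 𝒱 ℰ : ℝ → ℝ) (ρ ν₀ : ℝ)
    (hρ : 0 ≤ ρ) (hν₀ : 0 < ν₀)
    (hV : Differentiable ℝ V) (hE : Differentiable ℝ E)
    (h𝒱 : Differentiable ℝ 𝒱) (hℰ : Differentiable ℝ ℰ)
    (hVode : ∀ τ, deriv V τ = deriv 𝒱 τ)
    (hEode : ∀ τ, deriv E τ = deriv ℰ τ - (ρ / ν₀) * (E τ - (V τ) ^ 2))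
    (hvar : ∀ τ, 0 ≤ E τ - (V τ) ^ 2)
    (hV0 : V 0 = 𝒱 0) (hE0 : E 0 = ℰ 0) :
    ∀ τ ≥ 0, V τ = 𝒱 τ ∧ E τ - (V τ) ^ 2 ≤ ℰ τ - (𝒱 τ) ^ 2 := by
  have hV𝒱 : V = 𝒱 := eq_of_fderiv_eq hV h𝒱
    (fun τ => by rw [← toSpanSingleton_deriv, ← toSpanSingleton_deriv, hVode]) 0 hV0
  have hEℰ : ∀ τ, deriv E τ ≤ deriv ℰ τ := fun τ => by
    have hdamping : 0 ≤ (ρ / ν₀) * (E τ - (V τ) ^ 2) :=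
      mul_nonneg (div_nonneg hρ hν₀.le) (hvar τ)
    linarith [hEode τ]
  intro τ hτ
  subst hV𝒱
  exact ⟨rfl, by linarith [le_of_deriv_le_of_le hE hℰ hEℰ hτ hE0.le]⟩
end

section
/- Let V be differentiable with dV/dτ = F(τ) + (ρ/(2ν₀))(v_d − V) where |F(τ)| ≤ ρ/2 for all τ, ρ > 0, ν₀ > 0, v_d ∈ [0,1], and V(τ) ∈ [0,1]. Then limsup_{τ→∞} |V(τ) − v_d| ≤ ν₀. -/
/-! With `e = V - v_d` and `k = ρ / (2ν₀)` the equation reads `e' = F - k e` with `|F| ≤ k ν₀`,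
so both `e` and `-e` satisfy the differential inequality `f' ≤ k (ν₀ - f)`. Gronwall's inequality
gives `|e τ| ≤ ν₀ + C exp (-k τ)`, and the exponential term dies out. -/

open Filter Real

theorem le_add_mul_exp_of_hasDerivAt_le {f f' : ℝ → ℝ} {k c : ℝ}
    (hf : ∀ t, HasDerivAt f (f' t) t) (hf' : ∀ t, f' t ≤ k * (c - f t)) {t : ℝ} (ht : 0 ≤ t) :
    f t ≤ c + (f 0 - c) * exp (-(k * t)) := by
  have hgronwall := le_gronwallBound_of_liminf_deriv_right_le (δ := f 0) (K := -k) (ε := k * c)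
    (fun x _ => (hf x).continuousAt.continuousWithinAt)
    (fun x _ _ hr => (hf x).hasDerivWithinAt.liminf_right_slope_le hr) le_rfl
    (fun x _ => (hf' x).trans_eq (by ring)) t ⟨ht, le_rfl⟩
  rcases eq_or_ne k 0 with rfl | hk
  · simpa [gronwallBound_K0] using hgronwall
  · simp only [gronwallBound_of_K_ne_0 (neg_ne_zero.mpr hk), sub_zero, neg_mul] at hgronwall
    convert hgronwall using 1
    field_simp
    ring

theorem limsup_abs_le_of_hasDerivAt_sub_mul {e g : ℝ → ℝ} {k c : ℝ} (hk : 0 < k)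
    (he : ∀ t, HasDerivAt e (g t - k * e t) t) (hg : ∀ t, |g t| ≤ k * c) :
    limsup (fun t => |e t|) atTop ≤ c := by
  set M := |e 0| + |c|
  have hbound : ∀ t, 0 ≤ t → |e t| ≤ c + M * exp (-(k * t)) := by
    intro t ht
    have hexp := (exp_pos (-(k * t))).le
    have hupper := le_add_mul_exp_of_hasDerivAt_le (k := k) (c := c) he
      (fun t => by linarith [(abs_le.mp (hg t)).2]) ht
    have hlower := le_add_mul_exp_of_hasDerivAt_le (k := k) (c := c) (f := fun t => -e t)
      (fun t => (he t).neg) (fun t => by linarith [(abs_le.mp (hg t)).1]) ht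
    have hMe : e 0 - c ≤ M := by linarith [le_abs_self (e 0), neg_abs_le c]
    have hMe' : -e 0 - c ≤ M := by linarith [neg_abs_le (e 0), neg_abs_le c]
    rw [abs_le]
    constructor
    · linarith [mul_le_mul_of_nonneg_right hMe' hexp]
    · linarith [mul_le_mul_of_nonneg_right hMe hexp]
  have hdecay : Tendsto (fun t => c + M * exp (-(k * t))) atTop (nhds c) := by
    have := (tendsto_exp_neg_atTop_nhds_zero.comp (tendsto_id.const_mul_atTop hk)).const_mul M
    simpa using this.const_add c
  have hcobdd : IsCoboundedUnder (· ≤ ·) atTop fun t => |e t| :=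
    (isBoundedUnder_of_eventually_ge (.of_forall fun t => abs_nonneg (e t))).isCoboundedUnder_le
  calc limsup (fun t => |e t|) atTop
      ≤ limsup (fun t => c + M * exp (-(k * t))) atTop :=
        limsup_le_limsup ((eventually_ge_atTop 0).mono hbound) hcobdd hdecay.isBoundedUnder_le
    _ = c := hdecay.limsup_eq

theorem stmt11_general (V F : ℝ → ℝ) (ρ ν₀ vd : ℝ)
    (hρ : 0 < ρ) (hν₀ : 0 < ν₀)
    (hode : ∀ τ, HasDerivAt V (F τ + (ρ / (2 * ν₀)) * (vd - V τ)) τ)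
    (hF : ∀ τ, |F τ| ≤ ρ / 2) :
    Filter.limsup (fun τ => |V τ - vd|) Filter.atTop ≤ ν₀ := by
  have hk : 0 < ρ / (2 * ν₀) := by positivity
  refine limsup_abs_le_of_hasDerivAt_sub_mul hk (fun τ => ((hode τ).sub_const vd).congr_deriv ?_)
    (fun τ => (hF τ).trans_eq ?_)
  · ring
  · field_simp

theorem stmt11 (V F : ℝ → ℝ) (ρ ν₀ vd : ℝ)
    (hρ : 0 < ρ) (hν₀ : 0 < ν₀) (hvd : vd ∈ Set.Icc (0:ℝ) 1)
    (hode : ∀ τ, HasDerivAt V (F τ + (ρ / (2 * ν₀)) * (vd - V τ)) τ)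
    (hF : ∀ τ, |F τ| ≤ ρ / 2)
    (hVbd : ∀ τ, V τ ∈ Set.Icc (0:ℝ) 1) :
    Filter.limsup (fun τ => |V τ - vd|) Filter.atTop ≤ ν₀ :=
  stmt11_general V F ρ ν₀ vd hρ hν₀ hode hF
end

section
/- Let E be differentiable with dE/dτ = G(τ) − (ρ/ν₀)(E − v_d·V(τ)), where |G(τ)| ≤ ρ, |V(τ) − v_d| ≤ ν₀ for all τ ≥ T for some T, ρ > 0, ν₀ > 0, v_d ∈ [0,1], and E(τ) ∈ [0,1]. Then limsup_{τ→∞} |E(τ) − v_d²| ≤ ν₀(v_d + 1). -/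
open Filter Real Set Topology

/-!
Writing `F = E - v_d²`, the equation reads `F' + λ F = G + λ v_d (V - v_d)` with `λ = ρ / ν₀`, and
the forcing on the right is bounded by `ρ + λ v_d ν₀ = λ ν₀ (v_d + 1)` once `τ ≥ T`. A linear
equation with decay rate `λ > 0` and forcing bounded by `λ M` is eventually within `M` of the
origin up to an error `e^{-λ(τ - T)}`, as one sees from the monotonicity of `e^{λτ} (±F - M)`.
-/

theorem le_of_hasDerivAt_le_neg_mul_sub {F F' : ℝ → ℝ} {c M T : ℝ}
    (hF : ∀ t ≥ T, HasDerivAt F (F' t) t) (hF' : ∀ t ≥ T, F' t ≤ -c * (F t - M))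
    {t : ℝ} (ht : T ≤ t) :
    F t ≤ M + exp (c * (T - t)) * (F T - M) := by
  set g : ℝ → ℝ := fun s => exp (c * s) * (F s - M)
  have hg : ∀ s ≥ T, HasDerivAt g (c * exp (c * s) * (F s - M) + exp (c * s) * F' s) s := by
    intro s hs
    have hexp : HasDerivAt (fun s => exp (c * s)) (c * exp (c * s)) s := by
      simpa [mul_comm] using ((hasDerivAt_id s).const_mul c).exp
    exact hexp.mul ((hF s hs).sub_const M)
  have hanti : AntitoneOn g (Ici T) := by
    refine antitoneOn_of_deriv_nonpos (convex_Ici T)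
      (fun s hs => (hg s hs).continuousAt.continuousWithinAt)
      (fun s hs => ?_) (fun s hs => ?_) <;> rw [interior_Ici] at hs
    · exact (hg s hs.le).differentiableAt.differentiableWithinAt
    · rw [(hg s hs.le).deriv]
      nlinarith [hF' s hs.le, exp_pos (c * s)]
  have hgt : exp (c * t) * (F t - M) ≤ exp (c * T) * (F T - M) :=
    hanti self_mem_Ici ht ht
  have hsplit : exp (c * T) = exp (c * t) * exp (c * (T - t)) := by
    rw [← exp_add]; ring_nf
  rw [hsplit, mul_assoc] at hgt
  linarith [le_of_mul_le_mul_left hgt (exp_pos (c * t))]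

theorem abs_le_of_hasDerivAt_abs_add_mul_le {F F' : ℝ → ℝ} {c M T : ℝ}
    (hF : ∀ t ≥ T, HasDerivAt F (F' t) t) (hF' : ∀ t ≥ T, |F' t + c * F t| ≤ c * M)
    {t : ℝ} (ht : T ≤ t) :
    |F t| ≤ M + exp (c * (T - t)) * (|F T| - M) := by
  have hupper := le_of_hasDerivAt_le_neg_mul_sub (c := c) (M := M) hF
    (fun s hs => by linarith [(abs_le.mp (hF' s hs)).2]) ht
  have hlower := le_of_hasDerivAt_le_neg_mul_sub (F := -F) (F' := -F') (c := c) (M := M)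
    (fun s hs => (hF s hs).neg) (fun s hs => by
      simp only [Pi.neg_apply]; linarith [(abs_le.mp (hF' s hs)).1]) ht
  simp only [Pi.neg_apply] at hlower
  have he := (exp_pos (c * (T - t))).le
  rw [abs_le]
  constructor <;> nlinarith [le_abs_self (F T), neg_abs_le (F T)]

theorem limsup_abs_le_of_hasDerivAt_abs_add_mul_le {F F' : ℝ → ℝ} {c M T : ℝ} (hc : 0 < c)
    (hF : ∀ t ≥ T, HasDerivAt F (F' t) t) (hF' : ∀ t ≥ T, |F' t + c * F t| ≤ c * M) :
    limsup (fun t => |F t|) atTop ≤ M := by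
  set bound : ℝ → ℝ := fun t => M + exp (c * (T - t)) * (|F T| - M)
  have hbound : Tendsto bound atTop (𝓝 M) := by
    have hlin : Tendsto (fun t : ℝ => c * (T - t)) atTop atBot :=
      ((tendsto_atBot_add_const_left atTop T tendsto_neg_atTop_atBot).const_mul_atBot hc).congr
        fun t => by ring
    simpa using tendsto_const_nhds.add
      ((tendsto_exp_atBot.comp hlin).mul_const (|F T| - M))
  have hle : ∀ᶠ t in atTop, |F t| ≤ bound t :=
    eventually_atTop.mpr ⟨T, fun t ht => abs_le_of_hasDerivAt_abs_add_mul_le hF hF' ht⟩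
  calc limsup (fun t => |F t|) atTop ≤ limsup bound atTop :=
        limsup_le_limsup hle (isBoundedUnder_of ⟨0, fun t => abs_nonneg _⟩).isCoboundedUnder_le
          hbound.isBoundedUnder_le
    _ = M := hbound.limsup_eq

theorem stmt12_general (E V G : ℝ → ℝ) (ρ ν₀ vd T : ℝ)
    (hρ : 0 < ρ) (hν₀ : 0 < ν₀) (hvd : vd ∈ Set.Icc (0:ℝ) 1)
    (hode : ∀ τ, HasDerivAt E (G τ - (ρ / ν₀) * (E τ - vd * V τ)) τ)
    (hG : ∀ τ, |G τ| ≤ ρ)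
    (hVnear : ∀ τ ≥ T, |V τ - vd| ≤ ν₀) :
    Filter.limsup (fun τ => |E τ - vd ^ 2|) Filter.atTop ≤ ν₀ * (vd + 1) := by
  set c := ρ / ν₀
  have hc : c * ν₀ = ρ := div_mul_cancel₀ ρ hν₀.ne'
  refine limsup_abs_le_of_hasDerivAt_abs_add_mul_le (T := T) (div_pos hρ hν₀)
    (fun τ _ => (hode τ).sub_const (vd ^ 2)) fun τ (hτ : τ ≥ T) => ?_
  have hcvd : 0 ≤ c * vd := mul_nonneg (div_pos hρ hν₀).le hvd.1
  calc |G τ - c * (E τ - vd * V τ) + c * (E τ - vd ^ 2)|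
      = |G τ + c * vd * (V τ - vd)| := by ring_nf
    _ ≤ |G τ| + |c * vd * (V τ - vd)| := abs_add_le _ _
    _ ≤ ρ + c * vd * ν₀ := by
        rw [abs_mul, abs_of_nonneg hcvd]
        exact add_le_add (hG τ) (mul_le_mul_of_nonneg_left (hVnear τ hτ) hcvd)
    _ = c * (ν₀ * (vd + 1)) := by rw [← hc]; ring

theorem stmt12 (E V G : ℝ → ℝ) (ρ ν₀ vd T : ℝ)
    (hρ : 0 < ρ) (hν₀ : 0 < ν₀) (hvd : vd ∈ Set.Icc (0:ℝ) 1)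
    (hode : ∀ τ, HasDerivAt E (G τ - (ρ / ν₀) * (E τ - vd * V τ)) τ)
    (hG : ∀ τ, |G τ| ≤ ρ)
    (hVnear : ∀ τ ≥ T, |V τ - vd| ≤ ν₀)
    (hEbd : ∀ τ, E τ ∈ Set.Icc (0:ℝ) 1) :
    Filter.limsup (fun τ => |E τ - vd ^ 2|) Filter.atTop ≤ ν₀ * (vd + 1) :=
  stmt12_general E V G ρ ν₀ vd T hρ hν₀ hvd hode hG hVnear
end

section
/- Let x: [0,∞) → ℝ be differentiable with x' = g(τ) − a(x − b(τ)), where a > 0, |g(τ)| ≤ M, and b(τ) → b* as τ → ∞ with |b(τ)| ≤ B. Then limsup_{τ→∞} |x(τ) − b*| ≤ M/a. -/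
/-!
With `y = x - bstar`, the equation reads `y' + a y = g + a (b - bstar)`, and the right-hand side is
eventually bounded by `M + a ε`. Grönwall's inequality with the negative rate `-a`, applied to `y`
and `-y`, bounds `|y|` by a function tending to `(M + a ε) / a`; let `ε → 0`.
-/

open Filter Topology

theorem le_gronwallBound_of_hasDerivAt_of_le {f f' : ℝ → ℝ} {δ K ε T : ℝ}
    (hf : ∀ t ≥ T, HasDerivAt f (f' t) t) (hT : f T ≤ δ) (bound : ∀ t ≥ T, f' t ≤ K * f t + ε) :
    ∀ t ≥ T, f t ≤ gronwallBound δ K ε (t - T) := fun t ht =>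
  le_gronwallBound_of_liminf_deriv_right_le (b := t)
    (fun s hs => (hf s hs.1).continuousAt.continuousWithinAt)
    (fun s hs _ hr => (hf s hs.1).hasDerivWithinAt.liminf_right_slope_le hr) hT
    (fun s hs => bound s hs.1) t ⟨ht, le_rfl⟩

theorem tendsto_gronwallBound_neg_atTop {δ a ε : ℝ} (ha : 0 < a) :
    Tendsto (gronwallBound δ (-a) ε) atTop (𝓝 (ε / a)) := by
  have hexp : Tendsto (fun t => Real.exp (-a * t)) atTop (𝓝 0) :=
    Real.tendsto_exp_atBot.comp (tendsto_id.const_mul_atTop_of_neg (neg_neg_of_pos ha))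
  rw [gronwallBound_of_K_ne_0 (neg_ne_zero.2 ha.ne')]
  convert (hexp.const_mul δ).add ((hexp.sub_const 1).const_mul (ε / -a)) using 2
  field_simp
  ring

theorem abs_le_gronwallBound_of_abs_deriv_add_mul_le {y y' : ℝ → ℝ} {a K T : ℝ}
    (hy : ∀ t ≥ T, HasDerivAt y (y' t) t) (bound : ∀ t ≥ T, |y' t + a * y t| ≤ K) :
    ∀ t ≥ T, |y t| ≤ gronwallBound |y T| (-a) K (t - T) := by
  have upper := le_gronwallBound_of_hasDerivAt_of_le (K := -a) (ε := K) hy (le_abs_self (y T))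
    fun t ht => by linarith [le_abs_self (y' t + a * y t), bound t ht]
  have lower := le_gronwallBound_of_hasDerivAt_of_le (K := -a) (ε := K) (f := fun t => -y t)
    (fun t ht => (hy t ht).neg) (neg_le_abs (y T))
    fun t ht => by linarith [neg_abs_le (y' t + a * y t), bound t ht]
  exact fun t ht => abs_le.2 ⟨by linarith [lower t ht], upper t ht⟩

theorem limsup_abs_le_of_abs_deriv_add_mul_le {y y' : ℝ → ℝ} {a K : ℝ} (ha : 0 < a)
    (hy : ∀ᶠ t in atTop, HasDerivAt y (y' t) t) (bound : ∀ᶠ t in atTop, |y' t + a * y t| ≤ K) :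
    limsup (fun t => |y t|) atTop ≤ K / a := by
  obtain ⟨T, hT⟩ := eventually_atTop.1 (hy.and bound)
  have hlim := tendsto_gronwallBound_neg_atTop (δ := |y T|) (ε := K) ha
  have hshift := hlim.comp (tendsto_atTop_add_const_right _ (-T) tendsto_id)
  calc limsup (fun t => |y t|) atTop
      ≤ limsup (fun t => gronwallBound |y T| (-a) K (t - T)) atTop := by
        refine limsup_le_limsup ?_ (isCoboundedUnder_le_of_le _ fun t => abs_nonneg _)
          hshift.isBoundedUnder_le
        filter_upwards [eventually_ge_atTop T] with t ht
        exact abs_le_gronwallBound_of_abs_deriv_add_mul_le (fun t ht => (hT t ht).1)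
          (fun t ht => (hT t ht).2) t ht
    _ = K / a := hshift.limsup_eq

theorem stmt18_general (x g b : ℝ → ℝ) (a M bstar : ℝ)
    (ha : 0 < a) (hg : ∀ τ, |g τ| ≤ M)
    (hb : Filter.Tendsto b Filter.atTop (nhds bstar))
    (hode : ∀ τ, HasDerivAt x (g τ - a * (x τ - b τ)) τ) :
    Filter.limsup (fun τ => |x τ - bstar|) Filter.atTop ≤ M / a := by
  refine le_of_forall_pos_le_add fun ε hε => ?_
  have hb_near : ∀ᶠ τ in atTop, |b τ - bstar| ≤ ε := by
    simpa [Real.dist_eq] using hb.eventually (Metric.closedBall_mem_nhds bstar hε)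
  have hforcing : ∀ᶠ τ in atTop,
      |(g τ - a * (x τ - b τ)) + a * (x τ - bstar)| ≤ M + a * ε := by
    filter_upwards [hb_near] with τ hτ
    calc |(g τ - a * (x τ - b τ)) + a * (x τ - bstar)| = |g τ + a * (b τ - bstar)| := by ring_nf
      _ ≤ |g τ| + a * |b τ - bstar| := by
        simpa only [abs_mul, abs_of_pos ha] using abs_add_le (g τ) (a * (b τ - bstar))
      _ ≤ M + a * ε := add_le_add (hg τ) (mul_le_mul_of_nonneg_left hτ ha.le)
  calc limsup (fun τ => |x τ - bstar|) atTop ≤ (M + a * ε) / a :=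
        limsup_abs_le_of_abs_deriv_add_mul_le ha
          (Eventually.of_forall fun τ => (hode τ).sub_const bstar) hforcing
    _ = M / a + ε := by field_simp

theorem stmt18 (x g b : ℝ → ℝ) (a M B bstar : ℝ)
    (ha : 0 < a) (hg : ∀ τ, |g τ| ≤ M) (hB : ∀ τ, |b τ| ≤ B)
    (hb : Filter.Tendsto b Filter.atTop (nhds bstar))
    (hode : ∀ τ, HasDerivAt x (g τ - a * (x τ - b τ)) τ) :
    Filter.limsup (fun τ => |x τ - bstar|) Filter.atTop ≤ M / a :=
  stmt18_general x g b a M bstar ha hg hb hode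
end
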